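/- Let X be a compact metric space with diam(X) < π/2, p > 1, and fix ν ∈ P_p(Susp(X)) supported on the equator X × {π/2}. Then max over μ ∈ P_p(Susp(X)) of W_p(ν,μ) equals π/2, and the maximizers are exactly the measures supported on {𝟎, 𝛑}, i.e., measures of the form (1-λ)δ_𝟎 + λδ_𝛑, λ ∈ [0,1]. -/

import Mathlib

/-!
A point of the equator is within `π / 2` of every point of `Susp(X)`, with equality exactly at
the two vertices, because `cos (d x y) > 0`. Hence every coupling of `ν` with `μ` costs at most
`π / 2`, and exactly `π / 2` when `μ` lives on the vertices. Conversely, if `W_p(ν, μ) = π / 2`, the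
product coupling `ν ⊗ μ` has cost `π / 2`, which forces distance `π / 2` on `ν ⊗ μ`-almost all
pairs; a single equator point with this property already shows that `μ`-almost every point is a
vertex.
-/

open MeasureTheory

/-- An abstract presentation of the spherical suspension of a metric space `X`. -/
structure SuspensionOf (X : Type*) [MetricSpace X] (S : Type*) [MetricSpace S] where
  pt : X → ℝ → S
  surj : ∀ z : S, ∃ x : X, ∃ t ∈ Set.Icc (0 : ℝ) Real.pi, pt x t = z
  dist_eq : ∀ (x y : X) (t s : ℝ), t ∈ Set.Icc (0 : ℝ) Real.pi →
    s ∈ Set.Icc (0 : ℝ) Real.pi →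
    dist (pt x t) (pt y s) =
      Real.arccos (Real.cos t * Real.cos s +
        Real.sin t * Real.sin s * Real.cos (dist x y))

/-- The `p`-Wasserstein distance associated to a cost (distance) function `d`. -/
noncomputable def Wp {Z : Type*} [MeasurableSpace Z] (d : Z → Z → ℝ) (p : ℝ)
    (μ ν : Measure Z) : ℝ :=
  sInf {c : ℝ | ∃ γ : Measure (Z × Z), IsProbabilityMeasure γ ∧
    γ.map Prod.fst = μ ∧ γ.map Prod.snd = ν ∧
    c = (∫ z, d z.1 z.2 ^ p ∂γ) ^ (1 / p)}

open Real Set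

lemma ae_eq_of_ae_le_of_le_integral {α : Type*} [MeasurableSpace α] {μ : Measure α}
    [IsProbabilityMeasure μ] {f : α → ℝ} {C : ℝ} (hC : 0 < C) (hf : ∀ᵐ x ∂μ, f x ≤ C)
    (hint : C ≤ ∫ x, f x ∂μ) : ∀ᵐ x ∂μ, f x = C := by
  -- otherwise `∫ f = 0 < C`
  have hfi : Integrable f μ := .of_integral_ne_zero (by linarith)
  have hgap : 0 ≤ᵐ[μ] fun x => C - f x := hf.mono fun x hx => sub_nonneg.2 hx
  have hzero : ∫ x, (C - f x) ∂μ = 0 := by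
    refine le_antisymm ?_ (integral_nonneg_of_ae hgap)
    rw [integral_sub (integrable_const C) hfi, integral_const, probReal_univ, one_smul]
    linarith
  filter_upwards [(integral_eq_zero_iff_of_nonneg_ae hgap ((integrable_const C).sub hfi)).1 hzero]
    with x hx
  linarith [show C - f x = 0 from hx]

section Wasserstein

variable {Z : Type*} [MeasurableSpace Z] {d : Z → Z → ℝ} {p R : ℝ} {μ ν : Measure Z}

lemma Wp_le_of_coupling (hd : ∀ a b, 0 ≤ d a b) (γ : Measure (Z × Z)) [IsProbabilityMeasure γ]
    (h₁ : γ.map Prod.fst = μ) (h₂ : γ.map Prod.snd = ν) :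
    Wp d p μ ν ≤ (∫ z, d z.1 z.2 ^ p ∂γ) ^ (1 / p) := by
  refine csInf_le ⟨0, ?_⟩ ⟨γ, inferInstance, h₁, h₂, rfl⟩
  rintro c ⟨γ', -, -, -, rfl⟩
  exact rpow_nonneg (integral_nonneg fun z => rpow_nonneg (hd _ _) p) _

lemma Wp_le_cost_prod [IsProbabilityMeasure μ] [IsProbabilityMeasure ν] (hd : ∀ a b, 0 ≤ d a b) :
    Wp d p μ ν ≤ (∫ z, d z.1 z.2 ^ p ∂μ.prod ν) ^ (1 / p) :=
  Wp_le_of_coupling hd (μ.prod ν) Measure.fst_prod Measure.snd_prod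

lemma ae_rpow_le_of_ae_forall_le [IsProbabilityMeasure ν] (hd : ∀ a b, 0 ≤ d a b) (hp : 0 ≤ p)
    (h : ∀ᵐ x ∂μ, ∀ y, d x y ≤ R) : ∀ᵐ z ∂μ.prod ν, d z.1 z.2 ^ p ≤ R ^ p := by
  have h' : ∀ᵐ z ∂μ.prod ν, ∀ y, d z.1 y ≤ R :=
    ae_of_ae_map measurable_fst.aemeasurable <| by
      change ∀ᵐ x ∂(μ.prod ν).fst, _
      rwa [Measure.fst_prod]
  exact h'.mono fun z hz => rpow_le_rpow (hd _ _) (hz z.2) hp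

lemma Wp_le_of_ae_forall_le [IsProbabilityMeasure μ] [IsProbabilityMeasure ν]
    (hd : ∀ a b, 0 ≤ d a b) (hp : 0 < p) (hR : 0 ≤ R) (h : ∀ᵐ x ∂μ, ∀ y, d x y ≤ R) :
    Wp d p μ ν ≤ R := by
  have hint : ∫ z, d z.1 z.2 ^ p ∂μ.prod ν ≤ R ^ p := by
    have hnorm : ∀ᵐ z ∂μ.prod ν, ‖d z.1 z.2 ^ p‖ ≤ R ^ p :=
      (ae_rpow_le_of_ae_forall_le hd hp.le h).mono fun z hz => by
        rwa [Real.norm_of_nonneg (rpow_nonneg (hd _ _) p)]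
    simpa using (le_abs_self _).trans (norm_integral_le_of_norm_le_const hnorm)
  calc Wp d p μ ν ≤ (∫ z, d z.1 z.2 ^ p ∂μ.prod ν) ^ (1 / p) := Wp_le_cost_prod hd
    _ ≤ (R ^ p) ^ (1 / p) :=
      rpow_le_rpow (integral_nonneg fun z => rpow_nonneg (hd _ _) p) hint (by positivity)
    _ = R := by rw [one_div, rpow_rpow_inv hR hp.ne']

lemma Wp_eq_of_forall_coupling_ae_eq [IsProbabilityMeasure μ] [IsProbabilityMeasure ν] (hp : p ≠ 0)
    (hR : 0 ≤ R) (h : ∀ γ : Measure (Z × Z), IsProbabilityMeasure γ → γ.map Prod.fst = μ →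
      γ.map Prod.snd = ν → ∀ᵐ z ∂γ, d z.1 z.2 = R) :
    Wp d p μ ν = R := by
  have hcost : ∀ γ : Measure (Z × Z), IsProbabilityMeasure γ → γ.map Prod.fst = μ →
      γ.map Prod.snd = ν → (∫ z, d z.1 z.2 ^ p ∂γ) ^ (1 / p) = R := by
    intro γ hγ h₁ h₂
    rw [integral_congr_ae ((h γ hγ h₁ h₂).mono fun z hz => by rw [hz]), integral_const,
      probReal_univ, one_smul, one_div, rpow_rpow_inv hR hp]
  have hset : {c : ℝ | ∃ γ : Measure (Z × Z), IsProbabilityMeasure γ ∧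
      γ.map Prod.fst = μ ∧ γ.map Prod.snd = ν ∧
      c = (∫ z, d z.1 z.2 ^ p ∂γ) ^ (1 / p)} = {R} := by
    ext c
    constructor
    · rintro ⟨γ, hγ, h₁, h₂, rfl⟩
      exact hcost γ hγ h₁ h₂
    · rintro rfl
      exact ⟨μ.prod ν, inferInstance, Measure.fst_prod, Measure.snd_prod,
        (hcost _ inferInstance Measure.fst_prod Measure.snd_prod).symm⟩
  rw [Wp, hset, csInf_singleton]

lemma ae_ae_eq_of_le_Wp [IsProbabilityMeasure μ] [IsProbabilityMeasure ν]
    (hd : ∀ a b, 0 ≤ d a b) (hp : 0 < p) (hR : 0 < R) (h : ∀ᵐ x ∂μ, ∀ y, d x y ≤ R)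
    (hW : R ≤ Wp d p μ ν) : ∀ᵐ x ∂μ, ∀ᵐ y ∂ν, d x y = R := by
  have hint : R ^ p ≤ ∫ z, d z.1 z.2 ^ p ∂μ.prod ν := by
    have := rpow_le_rpow hR.le (hW.trans (Wp_le_cost_prod hd)) hp.le
    rwa [one_div, rpow_inv_rpow (integral_nonneg fun z => rpow_nonneg (hd _ _) p) hp.ne'] at this
  have hpow := ae_eq_of_ae_le_of_le_integral (rpow_pos_of_pos hR p)
    (ae_rpow_le_of_ae_forall_le hd hp.le h) hint
  refine Measure.ae_ae_of_ae_prod (p := fun z => d z.1 z.2 = R) (hpow.mono fun z hz => ?_)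
  rw [← rpow_rpow_inv (hd z.1 z.2) hp.ne', hz, rpow_rpow_inv hR.le hp.ne']

end Wasserstein

section TwoPoints

variable {α : Type*} [MeasurableSpace α] {a b : α}

lemma exists_eq_smul_dirac_add_smul_dirac [MeasurableSingletonClass α] (hab : a ≠ b)
    (μ : Measure α) [IsProbabilityMeasure μ]
    (h : ∀ᵐ x ∂μ, x = a ∨ x = b) :
    ∃ lam ∈ Icc (0 : ℝ) 1,
      μ = ENNReal.ofReal (1 - lam) • Measure.dirac a + ENNReal.ofReal lam • Measure.dirac b := by
  have hμ : μ = μ {a} • Measure.dirac a + μ {b} • Measure.dirac b := by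
    calc μ = μ.restrict ({a} ∪ {b}) := (Measure.restrict_eq_self_of_ae_mem h).symm
      _ = _ := by
        rw [Measure.restrict_union (disjoint_singleton.2 hab) (measurableSet_singleton b),
          Measure.restrict_singleton, Measure.restrict_singleton]
  have hsum : μ.real {a} + μ.real {b} = 1 := by
    have hpair : MeasurableSet ({a} ∪ {b} : Set α) := .union (.singleton a) (.singleton b)
    rw [← measureReal_union (disjoint_singleton.2 hab) (.singleton b), measureReal_def,
      (ae_mem_iff_measure_eq hpair.nullMeasurableSet).1 h, measure_univ, ENNReal.toReal_one]
  refine ⟨μ.real {b}, ⟨measureReal_nonneg, hsum ▸ le_add_of_nonneg_left measureReal_nonneg⟩, ?_⟩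
  rwa [← hsum, add_sub_cancel_right, ofReal_measureReal, ofReal_measureReal]

lemma isProbabilityMeasure_smul_dirac_add_smul_dirac {lam : ℝ} (hlam : lam ∈ Icc (0 : ℝ) 1) :
    IsProbabilityMeasure
      (ENNReal.ofReal (1 - lam) • Measure.dirac a + ENNReal.ofReal lam • Measure.dirac b) := by
  constructor
  simp [← ENNReal.ofReal_add (sub_nonneg.2 hlam.2) hlam.1]

lemma ae_eq_or_eq_smul_dirac_add_smul_dirac [MeasurableSingletonClass α] (lam : ℝ) :
    ∀ᵐ x ∂(ENNReal.ofReal (1 - lam) • Measure.dirac a + ENNReal.ofReal lam • Measure.dirac b),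
      x = a ∨ x = b := by
  rw [ae_add_measure_iff]
  constructor <;> exact Measure.ae_smul_measure (by simp [ae_dirac_eq]) _

end TwoPoints

lemma zero_mem_Icc_zero_pi : (0 : ℝ) ∈ Icc 0 π := left_mem_Icc.2 pi_pos.le

lemma pi_mem_Icc_zero_pi : π ∈ Icc 0 π := right_mem_Icc.2 pi_pos.le

lemma pi_div_two_mem_Icc_zero_pi : π / 2 ∈ Icc 0 π := ⟨by positivity, by linarith [pi_pos]⟩

namespace SuspensionOf

variable {X S : Type*} [MetricSpace X] [MetricSpace S] (susp : SuspensionOf X S)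

lemma pt_zero_eq (x y : X) : susp.pt x 0 = susp.pt y 0 :=
  dist_eq_zero.mp <| by simp [susp.dist_eq x y 0 0 zero_mem_Icc_zero_pi zero_mem_Icc_zero_pi]

lemma pt_pi_eq (x y : X) : susp.pt x π = susp.pt y π :=
  dist_eq_zero.mp <| by simp [susp.dist_eq x y π π pi_mem_Icc_zero_pi pi_mem_Icc_zero_pi]

lemma dist_pt_zero_pt_pi (x y : X) : dist (susp.pt x 0) (susp.pt y π) = π := by
  simp [susp.dist_eq x y 0 π zero_mem_Icc_zero_pi pi_mem_Icc_zero_pi]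

lemma pt_zero_ne_pt_pi (x y : X) : susp.pt x 0 ≠ susp.pt y π := fun h =>
  pi_ne_zero (by rw [← susp.dist_pt_zero_pt_pi x y, h, dist_self])

lemma dist_equator {s : ℝ} (hs : s ∈ Icc 0 π) (x y : X) :
    dist (susp.pt x (π / 2)) (susp.pt y s) = arccos (sin s * cos (dist x y)) := by
  simp [susp.dist_eq x y _ s pi_div_two_mem_Icc_zero_pi hs]

lemma dist_equator_pt_zero (x y : X) : dist (susp.pt x (π / 2)) (susp.pt y 0) = π / 2 := by
  simp [susp.dist_equator zero_mem_Icc_zero_pi]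

lemma dist_equator_pt_pi (x y : X) : dist (susp.pt x (π / 2)) (susp.pt y π) = π / 2 := by
  simp [susp.dist_equator pi_mem_Icc_zero_pi]

lemma isometry_equator (hdiam : ∀ a b : X, dist a b ≤ π) :
    Isometry fun x => susp.pt x (π / 2) :=
  Isometry.of_dist_eq fun x y => by
    rw [susp.dist_equator pi_div_two_mem_Icc_zero_pi, sin_pi_div_two, one_mul,
      arccos_cos dist_nonneg (hdiam x y)]

lemma continuous_equator (hdiam : ∀ a b : X, dist a b ≤ π) :
    Continuous fun x => susp.pt x (π / 2) :=
  (susp.isometry_equator hdiam).continuous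

lemma dist_equator_le (hdiam : ∀ a b : X, dist a b ≤ π / 2) (x : X) (w : S) :
    dist (susp.pt x (π / 2)) w ≤ π / 2 := by
  obtain ⟨y, s, hs, rfl⟩ := susp.surj w
  rw [susp.dist_equator hs, arccos_le_pi_div_two]
  exact mul_nonneg (sin_nonneg_of_nonneg_of_le_pi hs.1 hs.2)
    (cos_nonneg_of_mem_Icc ⟨by linarith [pi_pos, dist_nonneg (x := x) (y := y)], hdiam x y⟩)

lemma eq_vertex_of_dist_equator_eq (hdiam : ∀ a b : X, dist a b < π / 2) {x : X} {w : S}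
    (h : dist (susp.pt x (π / 2)) w = π / 2) (z : X) :
    w = susp.pt z 0 ∨ w = susp.pt z π := by
  obtain ⟨y, s, hs, rfl⟩ := susp.surj w
  have hcos : 0 < cos (dist x y) :=
    cos_pos_of_mem_Ioo ⟨by linarith [pi_pos, dist_nonneg (x := x) (y := y)], hdiam x y⟩
  rw [susp.dist_equator hs, arccos_eq_pi_div_two, mul_eq_zero] at h
  have hsin : sin s = 0 := h.resolve_right hcos.ne'
  rcases hs.1.eq_or_lt with rfl | hs0
  · exact .inl (susp.pt_zero_eq y z)
  rcases hs.2.eq_or_lt with rfl | hsπ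
  · exact .inr (susp.pt_pi_eq y z)
  exact absurd hsin (sin_pos_of_pos_of_lt_pi hs0 hsπ).ne'

section EquatorialMeasure

variable [MeasurableSpace X] [BorelSpace X] [MeasurableSpace S] [BorelSpace S] (ν₀ : Measure X)

lemma isProbabilityMeasure_map_equator [IsProbabilityMeasure ν₀]
    (hdiam : ∀ a b : X, dist a b ≤ π) :
    IsProbabilityMeasure (ν₀.map fun x => susp.pt x (π / 2)) :=
  Measure.isProbabilityMeasure_map (susp.continuous_equator hdiam).aemeasurable

lemma ae_map_equator_forall_dist_le (hdiam : ∀ a b : X, dist a b ≤ π / 2) :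
    ∀ᵐ z ∂ν₀.map (fun x => susp.pt x (π / 2)), ∀ w, dist z w ≤ π / 2 := by
  have hclosed : IsClosed {z : S | ∀ w, dist z w ≤ π / 2} := by
    rw [ofPred_forall]
    exact isClosed_iInter fun w => isClosed_le (continuous_id.dist continuous_const)
      continuous_const
  have hφ := susp.continuous_equator fun a b => (hdiam a b).trans (by linarith [pi_pos])
  exact (ae_map_iff hφ.aemeasurable hclosed.measurableSet).2
    (ae_of_all _ (susp.dist_equator_le hdiam))

lemma Wp_map_equator_eq_of_ae_vertex [IsProbabilityMeasure ν₀]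
    (hdiam : ∀ a b : X, dist a b ≤ π) {p : ℝ} (hp : p ≠ 0) (y : X)
    (μ : Measure S) [IsProbabilityMeasure μ]
    (hμ : ∀ᵐ w ∂μ, w = susp.pt y 0 ∨ w = susp.pt y π) :
    Wp (fun a b : S => dist a b) p (ν₀.map fun x => susp.pt x (π / 2)) μ = π / 2 := by
  have := susp.isProbabilityMeasure_map_equator ν₀ hdiam
  have hclosed : IsClosed {z : S | dist z (susp.pt y 0) = π / 2 ∧ dist z (susp.pt y π) = π / 2} :=
    (isClosed_eq (continuous_id.dist continuous_const) continuous_const).inter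
      (isClosed_eq (continuous_id.dist continuous_const) continuous_const)
  have hν : ∀ᵐ z ∂ν₀.map (fun x => susp.pt x (π / 2)),
      dist z (susp.pt y 0) = π / 2 ∧ dist z (susp.pt y π) = π / 2 :=
    (ae_map_iff (susp.continuous_equator hdiam).aemeasurable hclosed.measurableSet).2
      (ae_of_all _ fun x => ⟨susp.dist_equator_pt_zero x y, susp.dist_equator_pt_pi x y⟩)
  refine Wp_eq_of_forall_coupling_ae_eq hp (by positivity) fun γ _ h₁ h₂ => ?_
  filter_upwards [ae_of_ae_map measurable_fst.aemeasurable (h₁ ▸ hν),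
    ae_of_ae_map measurable_snd.aemeasurable (h₂ ▸ hμ)] with z hz₁ hz₂
  rcases hz₂ with h | h <;> rw [h]
  exacts [hz₁.1, hz₁.2]

lemma ae_vertex_of_Wp_map_equator_eq [IsProbabilityMeasure ν₀]
    (hdiam : ∀ a b : X, dist a b < π / 2) {p : ℝ} (hp : 0 < p) (y : X)
    (μ : Measure S) [IsProbabilityMeasure μ]
    (hW : Wp (fun a b : S => dist a b) p (ν₀.map fun x => susp.pt x (π / 2)) μ = π / 2) :
    ∀ᵐ w ∂μ, w = susp.pt y 0 ∨ w = susp.pt y π := by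
  have hdiam_pi : ∀ a b : X, dist a b ≤ π := fun a b => (hdiam a b).le.trans (by linarith [pi_pos])
  have := susp.isProbabilityMeasure_map_equator ν₀ hdiam_pi
  have h := ae_ae_eq_of_le_Wp (fun a b => dist_nonneg) hp (by positivity)
    (susp.ae_map_equator_forall_dist_le ν₀ fun a b => (hdiam a b).le) hW.ge
  obtain ⟨x, hx⟩ := (ae_of_ae_map (susp.continuous_equator hdiam_pi).aemeasurable h).exists
  exact hx.mono fun w hw => susp.eq_vertex_of_dist_equator_eq hdiam hw y

end EquatorialMeasure

end SuspensionOf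

theorem stmt_17_general {X S : Type*} [MetricSpace X] [Nonempty X]
    [MeasurableSpace X] [BorelSpace X]
    [MetricSpace S] [MeasurableSpace S] [BorelSpace S]
    (hdiam : ∀ a b : X, dist a b < Real.pi / 2)
    (p : ℝ) (hp : 1 < p) (susp : SuspensionOf X S)
    (ν₀ : Measure X) [IsProbabilityMeasure ν₀] :
    (∀ μ : Measure S, IsProbabilityMeasure μ →
      Wp (fun a b : S => dist a b) p (ν₀.map (fun x : X => susp.pt x (Real.pi / 2))) μ ≤
        Real.pi / 2) ∧
    (∃ μ : Measure S, IsProbabilityMeasure μ ∧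
      Wp (fun a b : S => dist a b) p (ν₀.map (fun x : X => susp.pt x (Real.pi / 2))) μ =
        Real.pi / 2) ∧
    (∀ μ : Measure S, IsProbabilityMeasure μ →
      (Wp (fun a b : S => dist a b) p (ν₀.map (fun x : X => susp.pt x (Real.pi / 2))) μ =
          Real.pi / 2 ↔
        ∃ lam : ℝ, lam ∈ Set.Icc (0 : ℝ) 1 ∧
          μ = ENNReal.ofReal (1 - lam) •
                Measure.dirac (susp.pt (Classical.arbitrary X) 0) +
              ENNReal.ofReal lam •
                Measure.dirac (susp.pt (Classical.arbitrary X) Real.pi))) := by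
  set x₀ := Classical.arbitrary X
  have hp0 : 0 < p := by linarith
  have hdiam_pi : ∀ a b : X, dist a b ≤ π := fun a b => (hdiam a b).le.trans (by linarith [pi_pos])
  have := susp.isProbabilityMeasure_map_equator ν₀ hdiam_pi
  refine ⟨fun μ _ => Wp_le_of_ae_forall_le (fun a b => dist_nonneg) hp0 (by positivity)
      (susp.ae_map_equator_forall_dist_le ν₀ fun a b => (hdiam a b).le),
    ⟨Measure.dirac (susp.pt x₀ 0), inferInstance,
      susp.Wp_map_equator_eq_of_ae_vertex ν₀ hdiam_pi hp0.ne' x₀ _ (by simp [ae_dirac_eq])⟩,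
    fun μ _ => ⟨fun hW => exists_eq_smul_dirac_add_smul_dirac (susp.pt_zero_ne_pt_pi x₀ x₀) μ
      (susp.ae_vertex_of_Wp_map_equator_eq ν₀ hdiam hp0 x₀ μ hW), ?_⟩⟩
  rintro ⟨lam, hlam, rfl⟩
  have := isProbabilityMeasure_smul_dirac_add_smul_dirac (a := susp.pt x₀ 0) (b := susp.pt x₀ π)
    hlam
  exact susp.Wp_map_equator_eq_of_ae_vertex ν₀ hdiam_pi hp0.ne' x₀ _
    (ae_eq_or_eq_smul_dirac_add_smul_dirac lam)

/-- For a probability measure `ν` supported on the equator `X × {π/2}` of `Susp(X)`,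
the maximum of `W_p(ν,·)` over `P_p(Susp(X))` is `π/2`, attained exactly at the measures
supported on the vertices, i.e. measures of the form `(1-λ)δ_𝟎 + λδ_𝛑`, `λ ∈ [0,1]`. -/
theorem stmt_17 {X S : Type*} [MetricSpace X] [CompactSpace X] [Nonempty X]
    [MeasurableSpace X] [BorelSpace X]
    [MetricSpace S] [MeasurableSpace S] [BorelSpace S]
    (hdiam : ∀ a b : X, dist a b < Real.pi / 2)
    (p : ℝ) (hp : 1 < p) (susp : SuspensionOf X S)
    (ν₀ : Measure X) [IsProbabilityMeasure ν₀] :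
    (∀ μ : Measure S, IsProbabilityMeasure μ →
      Wp (fun a b : S => dist a b) p (ν₀.map (fun x : X => susp.pt x (Real.pi / 2))) μ ≤
        Real.pi / 2) ∧
    (∃ μ : Measure S, IsProbabilityMeasure μ ∧
      Wp (fun a b : S => dist a b) p (ν₀.map (fun x : X => susp.pt x (Real.pi / 2))) μ =
        Real.pi / 2) ∧
    (∀ μ : Measure S, IsProbabilityMeasure μ →
      (Wp (fun a b : S => dist a b) p (ν₀.map (fun x : X => susp.pt x (Real.pi / 2))) μ =
          Real.pi / 2 ↔
        ∃ lam : ℝ, lam ∈ Set.Icc (0 : ℝ) 1 ∧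
          μ = ENNReal.ofReal (1 - lam) •
                Measure.dirac (susp.pt (Classical.arbitrary X) 0) +
              ENNReal.ofReal lam •
                Measure.dirac (susp.pt (Classical.arbitrary X) Real.pi))) :=
  stmt_17_general hdiam p hp susp ν₀
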